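/- arXiv:1904.06947 — 5 statements merged into one kernel-verified Lean document; each statement's English description precedes it below -/
import Mathlib

section
/- Let Φ11, Φ12, Φ21, Φ22 be real n×n matrices satisfying the symplectic block identities and with Φ22 invertible, and let Φ1, Φ2 be real k×n matrices. Then the (n+k)×(n+k) block matrix D = [[ −Φ22⁻¹·Φ21 , Φ1ᵀ − Φ22⁻¹·Φ2ᵀ ], [ Φ1 − Φ2·(Φ11 − Φ12·Φ22⁻¹·Φ21) , Φ2·Φ12·Φ22⁻¹·Φ2ᵀ ]] is symmetric, i.e. Dᵀ = D. -/
/-!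
Write `A = Φ22⁻¹ Φ21`. The second identity makes `A` symmetric, and together with the fourth it
gives `Φ11 - Φ12 A = (Φ22ᵀ)⁻¹`, so the two off-diagonal blocks of `D` are transposes of each
other. Substituting `Φ11 = (Φ22ᵀ)⁻¹ + Φ12 A` into the third identity shows that `(Φ12 Φ22⁻¹)ᵀ`
differs from the symmetric matrix `Φ11 Φ12ᵀ` by the symmetric matrix `Φ12 A Φ12ᵀ`; hence
`Φ12 Φ22⁻¹` and the lower-right block `Φ2 (Φ12 Φ22⁻¹) Φ2ᵀ` are symmetric.
-/

open Matrix

namespace Matrix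

theorem IsSymm.mul_mul_transpose {l m α : Type*} [Fintype m] [NonUnitalCommSemiring α]
    {S : Matrix m m α} (hS : S.IsSymm) (B : Matrix l m α) : (B * S * Bᵀ).IsSymm := by
  simp only [IsSymm, transpose_mul, transpose_transpose, hS.eq, Matrix.mul_assoc]

section SymplecticBlocks

variable {m R : Type*} [Fintype m] [DecidableEq m] [CommRing R] {A B C D : Matrix m m R}

theorem isSymm_nonsing_inv_mul (hD : IsUnit D) (hCD : D * Cᵀ = C * Dᵀ) : (D⁻¹ * C).IsSymm := by
  have hdet : IsUnit D.det := (isUnit_iff_isUnit_det D).mp hD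
  have hdetT : IsUnit Dᵀ.det := by rwa [det_transpose]
  calc (D⁻¹ * C)ᵀ = Cᵀ * Dᵀ⁻¹ := by rw [transpose_mul, transpose_nonsing_inv]
    _ = D⁻¹ * (D * Cᵀ) * Dᵀ⁻¹ := by rw [nonsing_inv_mul_cancel_left D _ hdet]
    _ = D⁻¹ * C * (Dᵀ * Dᵀ⁻¹) := by rw [hCD]; simp only [Matrix.mul_assoc]
    _ = D⁻¹ * C := by rw [mul_nonsing_inv _ hdetT, Matrix.mul_one]

theorem sub_mul_nonsing_inv_mul_eq_transpose_inv (hD : IsUnit D) (hCD : D * Cᵀ = C * Dᵀ)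
    (hAD : A * Dᵀ - B * Cᵀ = 1) : A - B * D⁻¹ * C = Dᵀ⁻¹ := by
  have hdet : IsUnit D.det := (isUnit_iff_isUnit_det D).mp hD
  refine (inv_eq_left_inv ?_).symm
  calc (A - B * D⁻¹ * C) * Dᵀ = A * Dᵀ - B * (D⁻¹ * (C * Dᵀ)) := by
        simp only [Matrix.sub_mul, Matrix.mul_assoc]
    _ = A * Dᵀ - B * Cᵀ := by rw [← hCD, nonsing_inv_mul_cancel_left D _ hdet]
    _ = 1 := hAD

theorem isSymm_mul_nonsing_inv (hD : IsUnit D) (hCD : D * Cᵀ = C * Dᵀ)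
    (hAD : A * Dᵀ - B * Cᵀ = 1) (hAB : A * Bᵀ = B * Aᵀ) : (B * D⁻¹).IsSymm := by
  have hA : A = Dᵀ⁻¹ + B * (D⁻¹ * C) := by
    rw [← sub_mul_nonsing_inv_mul_eq_transpose_inv hD hCD hAD, Matrix.mul_assoc]; abel
  have hABsymm : (A * Bᵀ).IsSymm := by
    rw [IsSymm, transpose_mul, transpose_transpose, hAB]
  have hsplit : (B * D⁻¹)ᵀ = A * Bᵀ - B * (D⁻¹ * C) * Bᵀ := by
    rw [hA, Matrix.add_mul, transpose_mul, transpose_nonsing_inv]; abel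
  rw [← isSymm_transpose_iff, IsSymm, hsplit]
  exact hABsymm.sub ((isSymm_nonsing_inv_mul hD hCD).mul_mul_transpose B)

end SymplecticBlocks

end Matrix

theorem stmt_0_general {n k : ℕ}
    (Φ11 Φ12 Φ21 Φ22 : Matrix (Fin n) (Fin n) ℝ)
    (Φ1 Φ2 : Matrix (Fin k) (Fin n) ℝ)
    (h2 : Φ22 * Φ21ᵀ - Φ21 * Φ22ᵀ = 0)
    (h3 : Φ11 * Φ12ᵀ - Φ12 * Φ11ᵀ = 0)
    (h4 : Φ11 * Φ22ᵀ - Φ12 * Φ21ᵀ = 1)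
    (hinv : IsUnit Φ22)
    (D : Matrix (Fin n ⊕ Fin k) (Fin n ⊕ Fin k) ℝ)
    (hD : D = Matrix.fromBlocks
      (-(Φ22⁻¹ * Φ21)) (Φ1ᵀ - Φ22⁻¹ * Φ2ᵀ)
      (Φ1 - Φ2 * (Φ11 - Φ12 * Φ22⁻¹ * Φ21)) (Φ2 * Φ12 * Φ22⁻¹ * Φ2ᵀ)) :
    Dᵀ = D := by
  have h21 := sub_eq_zero.mp h2
  have h12 := sub_eq_zero.mp h3
  rw [hD, sub_mul_nonsing_inv_mul_eq_transpose_inv hinv h21 h4, Matrix.mul_assoc Φ2 Φ12]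
  refine IsSymm.fromBlocks (isSymm_nonsing_inv_mul hinv h21).neg ?_
    ((isSymm_mul_nonsing_inv hinv h21 h4 h12).mul_mul_transpose Φ2)
  rw [transpose_sub, transpose_mul, transpose_transpose, transpose_transpose,
    transpose_nonsing_inv]

/-- The coefficient matrix `D` of the sweep-method algebraic system (13)/(30) is
symmetric, given the symplectic block identities and invertibility of `Φ22`. -/
theorem stmt_0 {n k : ℕ} (hn : 0 < n) (hk : 0 < k)
    (Φ11 Φ12 Φ21 Φ22 : Matrix (Fin n) (Fin n) ℝ)
    (Φ1 Φ2 : Matrix (Fin k) (Fin n) ℝ)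
    (h1 : Φ22 * Φ11ᵀ - Φ21 * Φ12ᵀ = 1)
    (h2 : Φ22 * Φ21ᵀ - Φ21 * Φ22ᵀ = 0)
    (h3 : Φ11 * Φ12ᵀ - Φ12 * Φ11ᵀ = 0)
    (h4 : Φ11 * Φ22ᵀ - Φ12 * Φ21ᵀ = 1)
    (hinv : IsUnit Φ22)
    (D : Matrix (Fin n ⊕ Fin k) (Fin n ⊕ Fin k) ℝ)
    (hD : D = Matrix.fromBlocks
      (-(Φ22⁻¹ * Φ21)) (Φ1ᵀ - Φ22⁻¹ * Φ2ᵀ)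
      (Φ1 - Φ2 * (Φ11 - Φ12 * Φ22⁻¹ * Φ21)) (Φ2 * Φ12 * Φ22⁻¹ * Φ2ᵀ)) :
    Dᵀ = D :=
  stmt_0_general Φ11 Φ12 Φ21 Φ22 Φ1 Φ2 h2 h3 h4 hinv D hD
end

section
/- (Lemma 2) Let Φ11, Φ12, Φ21, Φ22 be real n×n matrices satisfying the symplectic block identities with Φ22 invertible, and let Φ2 be any real k×n matrix. Then the k×k matrix Φ2·Φ12·Φ22⁻¹·Φ2ᵀ is symmetric. -/
open Matrix

/-! Writing `B = Φ22⁻¹ Φ21`, which is symmetric by the second identity, the first identity gives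
`Φ11ᵀ = Φ22⁻¹ + B Φ12ᵀ`. Substituting this into the third identity `Φ11 Φ12ᵀ = Φ12 Φ11ᵀ`, the
symmetric terms `Φ12 B Φ12ᵀ` cancel and what remains says that `Φ12 Φ22⁻¹` is symmetric;
congruence by `Φ2` preserves symmetry. -/

namespace Matrix

variable {m n R : Type*} [CommRing R]

theorem IsSymm.mul_mul_transpose_s2 [Fintype m] {M : Matrix m m R} (hM : M.IsSymm)
    (P : Matrix n m R) : (P * M * Pᵀ).IsSymm := by
  simp only [IsSymm, transpose_mul, transpose_transpose, hM.eq, Matrix.mul_assoc]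

variable [Fintype n] [DecidableEq n]

theorem isSymm_inv_mul_of_mul_transpose_eq {C D : Matrix n n R} (hD : IsUnit D)
    (h : D * Cᵀ = C * Dᵀ) : (D⁻¹ * C).IsSymm := by
  have hDinv : D⁻¹ * D = 1 := nonsing_inv_mul D ((isUnit_iff_isUnit_det D).mp hD)
  have hDTinv : Dᵀ * D⁻¹ᵀ = 1 := by rw [← transpose_mul, hDinv, transpose_one]
  calc (D⁻¹ * C)ᵀ = D⁻¹ * D * Cᵀ * D⁻¹ᵀ := by rw [transpose_mul, hDinv, Matrix.one_mul]
    _ = D⁻¹ * (C * Dᵀ) * D⁻¹ᵀ := by rw [Matrix.mul_assoc D⁻¹, h]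
    _ = D⁻¹ * C := by rw [Matrix.mul_assoc, Matrix.mul_assoc, hDTinv, Matrix.mul_one]

theorem transpose_eq_inv_add_of_symplectic {Φ11 Φ12 Φ21 Φ22 : Matrix n n R} (hΦ22 : IsUnit Φ22)
    (h1 : Φ22 * Φ11ᵀ - Φ21 * Φ12ᵀ = 1) : Φ11ᵀ = Φ22⁻¹ + Φ22⁻¹ * Φ21 * Φ12ᵀ := by
  have hinv : Φ22⁻¹ * Φ22 = 1 := nonsing_inv_mul Φ22 ((isUnit_iff_isUnit_det Φ22).mp hΦ22)
  rw [sub_eq_iff_eq_add] at h1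
  calc Φ11ᵀ = Φ22⁻¹ * (Φ22 * Φ11ᵀ) := by rw [← Matrix.mul_assoc, hinv, Matrix.one_mul]
    _ = Φ22⁻¹ + Φ22⁻¹ * Φ21 * Φ12ᵀ := by rw [h1]; noncomm_ring

theorem isSymm_mul_inv_of_symplectic {Φ11 Φ12 Φ21 Φ22 : Matrix n n R} (hΦ22 : IsUnit Φ22)
    (h1 : Φ22 * Φ11ᵀ - Φ21 * Φ12ᵀ = 1) (h2 : Φ22 * Φ21ᵀ - Φ21 * Φ22ᵀ = 0)
    (h3 : Φ11 * Φ12ᵀ - Φ12 * Φ11ᵀ = 0) : (Φ12 * Φ22⁻¹).IsSymm := by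
  have hB : (Φ22⁻¹ * Φ21).IsSymm :=
    isSymm_inv_mul_of_mul_transpose_eq hΦ22 (sub_eq_zero.mp h2)
  have h11T := transpose_eq_inv_add_of_symplectic hΦ22 h1
  have h11 : Φ11 = Φ22⁻¹ᵀ + Φ12 * (Φ22⁻¹ * Φ21) := by
    rw [← transpose_transpose Φ11, h11T, transpose_add, transpose_mul, hB.eq, transpose_transpose]
  rw [h11T, h11] at h3
  have h3' : Φ22⁻¹ᵀ * Φ12ᵀ = Φ12 * Φ22⁻¹ := by
    linear_combination (norm := noncomm_ring) h3
  rw [IsSymm, transpose_mul, transpose_nonsing_inv, ← transpose_nonsing_inv, h3']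

end Matrix

theorem stmt_2_general {n k : ℕ}
    (Φ11 Φ12 Φ21 Φ22 : Matrix (Fin n) (Fin n) ℝ)
    (Φ2 : Matrix (Fin k) (Fin n) ℝ)
    (h1 : Φ22 * Φ11ᵀ - Φ21 * Φ12ᵀ = 1)
    (h2 : Φ22 * Φ21ᵀ - Φ21 * Φ22ᵀ = 0)
    (h3 : Φ11 * Φ12ᵀ - Φ12 * Φ11ᵀ = 0)
    (hinv : IsUnit Φ22) :
    (Φ2 * Φ12 * Φ22⁻¹ * Φ2ᵀ)ᵀ = Φ2 * Φ12 * Φ22⁻¹ * Φ2ᵀ := by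
  have hsymm := (isSymm_mul_inv_of_symplectic hinv h1 h2 h3).mul_mul_transpose_s2 Φ2
  rwa [← Matrix.mul_assoc Φ2] at hsymm

/-- Lemma 2: under the symplectic block identities with `Φ22` invertible,
for any `k × n` matrix `Φ2` the matrix `Φ2 * Φ12 * Φ22⁻¹ * Φ2ᵀ` is symmetric. -/
theorem stmt_2 {n k : ℕ} (hn : 0 < n) (hk : 0 < k)
    (Φ11 Φ12 Φ21 Φ22 : Matrix (Fin n) (Fin n) ℝ)
    (Φ2 : Matrix (Fin k) (Fin n) ℝ)
    (h1 : Φ22 * Φ11ᵀ - Φ21 * Φ12ᵀ = 1)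
    (h2 : Φ22 * Φ21ᵀ - Φ21 * Φ22ᵀ = 0)
    (h3 : Φ11 * Φ12ᵀ - Φ12 * Φ11ᵀ = 0)
    (h4 : Φ11 * Φ22ᵀ - Φ12 * Φ21ᵀ = 1)
    (hinv : IsUnit Φ22) :
    (Φ2 * Φ12 * Φ22⁻¹ * Φ2ᵀ)ᵀ = Φ2 * Φ12 * Φ22⁻¹ * Φ2ᵀ :=
  stmt_2_general Φ11 Φ12 Φ21 Φ22 Φ2 h1 h2 h3 hinv
end

section
/- Let H : ℝ → M_{2n}(ℝ) be such that J·H(t) is a symmetric matrix for every t, where J = [[0, I],[−I, 0]]. Suppose Φ : ℝ → M_{2n}(ℝ) is a fundamental matrix of the system, i.e. Φ is differentiable with Φ'(t) = H(t)·Φ(t) for all t and Φ(t₀) = I. Then Φ(t)ᵀ·J·Φ(t) = J for all t ∈ ℝ (the fundamental matrix is symplectic). -/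
open Matrix

attribute [local instance] Matrix.normedAddCommGroup Matrix.normedSpace

/-! Since `Jᵀ = -J`, symmetry of `J H` says `Hᵀ J + J H = 0`, and then
`(Φᵀ J Φ)' = Φᵀ (Hᵀ J + J H) Φ = 0`, so `Φᵀ J Φ` keeps its value `J` at `t₀`. -/

section Calculus

variable {𝕜 : Type*} [NontriviallyNormedField 𝕜] {m n : Type*} {x : 𝕜}

theorem HasDerivAt.matrix_mul [Fintype m] [DecidableEq m] {f g : 𝕜 → Matrix m m 𝕜}
    {f' g' : Matrix m m 𝕜} (hf : HasDerivAt f f' x) (hg : HasDerivAt g g' x) :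
    HasDerivAt (fun t => f t * g t) (f' * g x + f x * g') x :=
  letI := Matrix.linftyOpNormedRing (n := m) (α := 𝕜)
  letI := Matrix.linftyOpNormedAlgebra (R := 𝕜) (n := m) (α := 𝕜)
  hf.mul hg

theorem HasDerivAt.matrix_transpose [Fintype m] [Fintype n] {f : 𝕜 → Matrix m n 𝕜}
    {f' : Matrix m n 𝕜} (hf : HasDerivAt f f' x) : HasDerivAt (fun t => (f t)ᵀ) f'ᵀ x :=
  (⟨(transposeLinearEquiv m n 𝕜 𝕜).toLinearMap, continuous_id.matrix_transpose⟩ :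
    Matrix m n 𝕜 →L[𝕜] Matrix n m 𝕜).hasFDerivAt.comp_hasDerivAt x hf

end Calculus

namespace Matrix

variable {m R : Type*} [CommRing R]

theorem transpose_mul_add_mul_eq_zero [Fintype m] {J A : Matrix m m R} (hJ : Jᵀ = -J)
    (hJA : (J * A)ᵀ = J * A) : Aᵀ * J + J * A = 0 := by
  rw [← hJA, transpose_mul, hJ, Matrix.mul_neg, add_neg_cancel]

theorem transpose_fromBlocks_zero_one_neg_one_zero [DecidableEq m] :
    (fromBlocks 0 1 (-1) 0 : Matrix (m ⊕ m) (m ⊕ m) R)ᵀ = -fromBlocks 0 1 (-1) 0 := by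
  simp [fromBlocks_transpose, fromBlocks_neg]

end Matrix

section Symplectic

variable {m : Type*} [Fintype m] [DecidableEq m] {J : Matrix m m ℝ}
  {H Φ : ℝ → Matrix m m ℝ}

theorem hasDerivAt_transpose_mul_mul_of_hamiltonian (hHam : ∀ t, (H t)ᵀ * J + J * H t = 0)
    (hΦ : ∀ t, HasDerivAt Φ (H t * Φ t) t) (t : ℝ) :
    HasDerivAt (fun t => (Φ t)ᵀ * J * Φ t) 0 t := by
  have h := (((hΦ t).matrix_transpose.matrix_mul (hasDerivAt_const t J)).matrix_mul (hΦ t))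
  convert h using 1
  calc (0 : Matrix m m ℝ) = (Φ t)ᵀ * ((H t)ᵀ * J + J * H t) * Φ t := by
        rw [hHam, Matrix.mul_zero, Matrix.zero_mul]
    _ = _ := by rw [transpose_mul]; noncomm_ring

theorem transpose_mul_mul_eq_of_hamiltonian (hHam : ∀ t, (H t)ᵀ * J + J * H t = 0)
    (hΦ : ∀ t, HasDerivAt Φ (H t * Φ t) t) (s t : ℝ) :
    (Φ t)ᵀ * J * Φ t = (Φ s)ᵀ * J * Φ s :=
  is_const_of_deriv_eq_zero
    (fun t => (hasDerivAt_transpose_mul_mul_of_hamiltonian hHam hΦ t).differentiableAt)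
    (fun t => (hasDerivAt_transpose_mul_mul_of_hamiltonian hHam hΦ t).deriv) t s

end Symplectic

/-- If `J * H t` is symmetric for all `t` (i.e. `H` is Hamiltonian-valued) and
`Φ` is the fundamental matrix solution of `Φ' = H Φ`, `Φ t₀ = 1`, then `Φ t` is
symplectic for all `t`: `(Φ t)ᵀ * J * Φ t = J`. -/
theorem stmt_9 {n : ℕ}
    (J : Matrix (Fin n ⊕ Fin n) (Fin n ⊕ Fin n) ℝ)
    (hJ : J = Matrix.fromBlocks 0 1 (-1) 0)
    (H Φ : ℝ → Matrix (Fin n ⊕ Fin n) (Fin n ⊕ Fin n) ℝ)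
    (hHam : ∀ t, (J * H t)ᵀ = J * H t)
    (t₀ : ℝ) (hΦ0 : Φ t₀ = 1)
    (hΦ : ∀ t, HasDerivAt Φ (H t * Φ t) t) :
    ∀ t, (Φ t)ᵀ * J * Φ t = J := by
  have hJT : Jᵀ = -J := hJ ▸ transpose_fromBlocks_zero_one_neg_one_zero
  intro t
  simpa [hΦ0] using transpose_mul_mul_eq_of_hamiltonian
    (fun t => transpose_mul_add_mul_eq_zero hJT (hHam t)) hΦ t₀ t
end

section
/- Let Φ11, Φ12, Φ21, Φ22 be real n×n matrices with Φ22 invertible, Φ1, Φ2 real k×n matrices, q ∈ ℝᵏ, x₀ ∈ ℝⁿ and ν ∈ ℝᵏ. Define λ₀ := −Φ1ᵀ·ν, x_τ := Φ11·x₀ + Φ12·λ₀ and λ_τ := Φ21·x₀ + Φ22·λ₀. Then the pair (x₀, ν) satisfies the linear algebraic system D·(x₀, ν) = (0, q), where D = [[ −Φ22⁻¹·Φ21 , Φ1ᵀ − Φ22⁻¹·Φ2ᵀ ], [ Φ1 − Φ2·(Φ11 − Φ12·Φ22⁻¹·Φ21) , Φ2·Φ12·Φ22⁻¹·Φ2ᵀ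 ]], if and only if λ_τ = −Φ2ᵀ·ν and Φ1·x₀ − Φ2·x_τ = q. -/
/-!
Put `w := λ(τ) + Φ2ᵀ ν`. Since `λ(τ) = Φ21 x₀ - Φ22 Φ1ᵀ ν`, the first block row of
`D (x₀, ν)` is `-Φ22⁻¹ w`, and the second is `Φ1 x₀ - Φ2 x(τ) + Φ2 Φ12 Φ22⁻¹ w`.
As `Φ22⁻¹` is injective, the first row vanishes exactly when the transversality condition
`w = 0` holds, and then the second row equals `q` exactly when the boundary condition does.
-/

open Matrix

theorem Sum.elim_eq_elim_iff {α β γ : Type*} {a c : α → γ} {b d : β → γ} :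
    Sum.elim a b = Sum.elim c d ↔ a = c ∧ b = d :=
  ⟨fun h => ⟨congr_arg (· ∘ Sum.inl) h, congr_arg (· ∘ Sum.inr) h⟩,
    fun ⟨hac, hbd⟩ => hac ▸ hbd ▸ rfl⟩

section SweepRows

variable {R m p : Type*} [CommRing R] [Fintype m] [DecidableEq m] [Fintype p]
  {P C : Matrix m m R} {A B : Matrix m p R} {x : m → R} {ν : p → R} {lam₀ lamτ : m → R}

theorem sweep_firstRow_eq (hP : P⁻¹ * P = 1) (hlam₀ : lam₀ = -(A *ᵥ ν))
    (hlamτ : lamτ = C *ᵥ x + P *ᵥ lam₀) :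
    (-(P⁻¹ * C)) *ᵥ x + (A - P⁻¹ * B) *ᵥ ν = -(P⁻¹ *ᵥ (lamτ + B *ᵥ ν)) := by
  subst hlam₀ hlamτ
  simp only [mulVec_add, mulVec_neg, neg_mulVec, sub_mulVec, mulVec_mulVec, ← Matrix.mul_assoc, hP,
    Matrix.one_mul]
  abel

theorem sweep_secondRow_eq {Q E : Matrix p m R} {S F : Matrix m m R} {xτ : m → R}
    (hP : P⁻¹ * P = 1) (hlam₀ : lam₀ = -(A *ᵥ ν)) (hxτ : xτ = S *ᵥ x + F *ᵥ lam₀)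
    (hlamτ : lamτ = C *ᵥ x + P *ᵥ lam₀) :
    (Q - E * (S - F * P⁻¹ * C)) *ᵥ x + (E * F * P⁻¹ * B) *ᵥ ν =
      Q *ᵥ x - E *ᵥ xτ + (E * F * P⁻¹) *ᵥ (lamτ + B *ᵥ ν) := by
  subst hlam₀ hxτ hlamτ
  simp only [mulVec_add, mulVec_neg, sub_mulVec, mulVec_mulVec, Matrix.mul_sub, Matrix.mul_assoc,
    ← Matrix.mul_assoc P⁻¹, hP, Matrix.one_mul]
  abel

end SweepRows

/-- The pair `(x₀, ν)` solves the sweep-method algebraic system `D (x₀, ν) = (0, q)`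
iff the transversality condition `λ(τ) = -Φ2ᵀ ν` and the unseparated boundary
condition `Φ1 x₀ - Φ2 x(τ) = q` hold. -/
theorem stmt_12 {n k : ℕ}
    (Φ11 Φ12 Φ21 Φ22 : Matrix (Fin n) (Fin n) ℝ)
    (hinv : IsUnit Φ22)
    (Φ1 Φ2 : Matrix (Fin k) (Fin n) ℝ)
    (q : Fin k → ℝ) (x₀ : Fin n → ℝ) (ν : Fin k → ℝ)
    (lam₀ xτ lamτ : Fin n → ℝ)
    (hlam₀ : lam₀ = -(Φ1ᵀ *ᵥ ν))
    (hxτ : xτ = Φ11 *ᵥ x₀ + Φ12 *ᵥ lam₀)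
    (hlamτ : lamτ = Φ21 *ᵥ x₀ + Φ22 *ᵥ lam₀)
    (D : Matrix (Fin n ⊕ Fin k) (Fin n ⊕ Fin k) ℝ)
    (hD : D = Matrix.fromBlocks
      (-(Φ22⁻¹ * Φ21)) (Φ1ᵀ - Φ22⁻¹ * Φ2ᵀ)
      (Φ1 - Φ2 * (Φ11 - Φ12 * Φ22⁻¹ * Φ21)) (Φ2 * Φ12 * Φ22⁻¹ * Φ2ᵀ)) :
    D *ᵥ Sum.elim x₀ ν = Sum.elim (0 : Fin n → ℝ) q ↔
      (lamτ = -(Φ2ᵀ *ᵥ ν) ∧ Φ1 *ᵥ x₀ - Φ2 *ᵥ xτ = q) := by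
  have hinv_mul : Φ22⁻¹ * Φ22 = 1 := nonsing_inv_mul _ ((isUnit_iff_isUnit_det _).mp hinv)
  have hinj : Function.Injective (Φ22⁻¹ *ᵥ ·) :=
    mulVec_injective_iff_isUnit.mpr (isUnit_nonsing_inv_iff.mpr hinv)
  rw [hD, fromBlocks_mulVec, Sum.elim_comp_inl, Sum.elim_comp_inr, Sum.elim_eq_elim_iff,
    sweep_firstRow_eq hinv_mul hlam₀ hlamτ, sweep_secondRow_eq hinv_mul hlam₀ hxτ hlamτ,
    neg_eq_zero, hinj.eq_iff' (mulVec_zero _), eq_neg_iff_add_eq_zero]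
  exact and_congr_right fun hw => by rw [hw, mulVec_zero, add_zero]
end

section
/- Let F be a real n×n matrix all of whose complex eigenvalues have negative real part (F is Hurwitz), and let S be any real n×n matrix. Then the improper integral ∫₀^∞ exp(t·F)·S·exp(t·Fᵀ) dt converges, and the matrix W₁ := −∫₀^∞ exp(t·F)·S·exp(t·Fᵀ) dt satisfies the algebraic Lyapunov equation −F·W₁ − W₁·Fᵀ + S = 0, i.e. F·W₁ + W₁·Fᵀ = S. -/
open Matrix MeasureTheory

attribute [local instance] Matrix.linftyOpNormedRing Matrix.linftyOpNormedAlgebra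

/-!
Writing `f t = e^{tF} S e^{tFᵀ}`, one has `f' = F f + f Fᵀ` and `f 0 = S`; if `f` decays
exponentially, integrating over `(0, ∞)` gives `F (∫ f) + (∫ f) Fᵀ = -S`.

Exponential decay of `e^{tF}` comes from the spectrum: every eigenvalue of `e^F` is `e^λ` for an
eigenvalue `λ` of `F` (an eigenvector of `F` inside an eigenspace of the commuting matrix `e^F`),
so the spectral radius of `e^F` is `< 1`. By Gelfand's formula some power `e^{kF}` has norm `< 1`,
and then `‖e^{tF}‖` decays like `‖e^{kF}‖^{t/k}`.
-/

open NormedSpace Filter Topology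

def ExpDecay {E : Type*} [SeminormedAddGroup E] (g : ℝ → E) : Prop :=
  ∃ C ε : ℝ, 0 < ε ∧ ∀ t : ℝ, 0 ≤ t → ‖g t‖ ≤ C * Real.exp (-ε * t)

namespace ExpDecay

section SeminormedGroup
variable {E : Type*} [SeminormedAddGroup E] {g : ℝ → E}

theorem comp_mul_left (hg : ExpDecay g) {c : ℝ} (hc : 0 < c) : ExpDecay fun t => g (c * t) := by
  obtain ⟨C, ε, hε, hC⟩ := hg
  refine ⟨C, ε * c, mul_pos hε hc, fun t ht => ?_⟩
  simpa [mul_assoc] using hC (c * t) (by positivity)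

theorem tendsto_atTop (hg : ExpDecay g) : Tendsto g atTop (𝓝 0) := by
  obtain ⟨C, ε, hε, hC⟩ := hg
  refine squeeze_zero_norm' (eventually_atTop.2 ⟨0, hC⟩) ?_
  simpa using (Real.tendsto_exp_atBot.comp
    (tendsto_id.const_mul_atTop_of_neg (neg_neg_of_pos hε))).const_mul C

end SeminormedGroup

theorem integrableOn_Ioi {E : Type*} [NormedAddCommGroup E] {g : ℝ → E} (hg : ExpDecay g)
    (hcont : Continuous g) :
    IntegrableOn g (Set.Ioi 0) := by
  obtain ⟨C, ε, hε, hC⟩ := hg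
  refine ((exp_neg_integrableOn_Ioi 0 hε).const_mul C).mono'
    hcont.aestronglyMeasurable.restrict ?_
  filter_upwards [self_mem_ae_restrict measurableSet_Ioi] with t ht
  simpa [neg_mul] using hC t (le_of_lt ht)

section SeminormedRing
variable {𝔸 : Type*} [NonUnitalSeminormedRing 𝔸] {g h : ℝ → 𝔸}

theorem mul_const (hg : ExpDecay g) (s : 𝔸) : ExpDecay fun t => g t * s := by
  obtain ⟨C, ε, hε, hC⟩ := hg
  refine ⟨C * ‖s‖, ε, hε, fun t ht => ?_⟩
  calc ‖g t * s‖ ≤ ‖g t‖ * ‖s‖ := norm_mul_le _ _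
    _ ≤ C * Real.exp (-ε * t) * ‖s‖ := by gcongr; exact hC t ht
    _ = C * ‖s‖ * Real.exp (-ε * t) := by ring

theorem mul (hg : ExpDecay g) (hh : ExpDecay h) : ExpDecay fun t => g t * h t := by
  obtain ⟨C₁, ε₁, hε₁, hC₁⟩ := hg
  obtain ⟨C₂, ε₂, hε₂, hC₂⟩ := hh
  refine ⟨C₁ * C₂, ε₁ + ε₂, add_pos hε₁ hε₂, fun t ht => ?_⟩
  calc ‖g t * h t‖ ≤ ‖g t‖ * ‖h t‖ := norm_mul_le _ _
    _ ≤ C₁ * Real.exp (-ε₁ * t) * (C₂ * Real.exp (-ε₂ * t)) :=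
      mul_le_mul (hC₁ t ht) (hC₂ t ht) (norm_nonneg _) ((norm_nonneg _).trans (hC₁ t ht))
    _ = C₁ * C₂ * Real.exp (-(ε₁ + ε₂) * t) := by
      rw [neg_add, add_mul, Real.exp_add]; ring

end SeminormedRing

end ExpDecay

section BanachAlgebra
variable {𝔸 : Type*} [NormedRing 𝔸] [NormedAlgebra ℝ 𝔸]

theorem expDecay_exp_smul_of_smul {a : 𝔸} {T : ℝ} (hT : 0 < T)
    (h : ExpDecay fun t => exp (t • T • a)) : ExpDecay fun t => exp (t • a) := by
  have hrescale (t : ℝ) : (T⁻¹ * t) • T • a = t • a := by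
    rw [smul_smul, mul_comm, mul_inv_cancel_left₀ hT.ne']
  simpa only [hrescale] using h.comp_mul_left (inv_pos.mpr hT)

variable [CompleteSpace 𝔸]

theorem exp_add_smul (a : 𝔸) (s t : ℝ) : exp ((s + t) • a) = exp (s • a) * exp (t • a) := by
  have hball : ∀ x : 𝔸, x ∈ Metric.eball 0 (expSeries ℝ 𝔸).radius := fun x => by
    simp [expSeries_radius_eq_top]
  rw [add_smul]
  exact exp_add_of_commute_of_mem_ball (((Commute.refl a).smul_left s).smul_right t)
    (hball _) (hball _)

theorem norm_exp_add_natCast_smul_le {a : 𝔸} {M q : ℝ}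
    (hM : ∀ s ∈ Set.Icc (0 : ℝ) 1, ‖exp (s • a)‖ ≤ M) (hq : ‖exp a‖ ≤ q) (k : ℕ) {s : ℝ}
    (hs : s ∈ Set.Icc (0 : ℝ) 1) : ‖exp ((s + k) • a)‖ ≤ M * q ^ k := by
  induction k with
  | zero => simpa using hM s hs
  | succ k ih =>
    rw [Nat.cast_succ, ← add_assoc, exp_add_smul, one_smul, pow_succ, ← mul_assoc]
    exact (norm_mul_le _ _).trans (mul_le_mul ih hq (norm_nonneg _) ((norm_nonneg _).trans ih))

theorem expDecay_exp_smul_of_norm_exp_lt_one {a : 𝔸} (h : ‖exp a‖ < 1) :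
    ExpDecay fun t => exp (t • a) := by
  have hcont : Continuous fun s : ℝ => exp (s • a) :=
    continuous_iff_continuousAt.2 fun s => (hasDerivAt_exp_smul_const a s).continuousAt
  obtain ⟨M, hM⟩ :=
    (isCompact_Icc (a := (0 : ℝ)) (b := 1)).exists_bound_of_continuousOn hcont.continuousOn
  -- `max _ (1 / 2)` keeps `q` positive: `‖exp a‖` vanishes in the zero algebra.
  set q := max ‖exp a‖ (1 / 2)
  have hq0 : 0 < q := lt_max_of_lt_right (by norm_num)
  have hlogq : Real.log q < 0 := Real.log_neg hq0 (max_lt h (by norm_num))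
  refine ⟨M * q⁻¹, -Real.log q, neg_pos.mpr hlogq, fun t ht => ?_⟩
  set k := ⌊t⌋₊
  have hk : t - k ∈ Set.Icc (0 : ℝ) 1 :=
    ⟨sub_nonneg.mpr (Nat.floor_le ht), by linarith [Nat.lt_floor_add_one t]⟩
  have hM0 : 0 ≤ M := (norm_nonneg _).trans (hM 0 (by simp))
  calc ‖exp (t • a)‖ = ‖exp ((t - k + k) • a)‖ := by rw [sub_add_cancel]
    _ ≤ M * q ^ k := norm_exp_add_natCast_smul_le hM (le_max_left _ _) k hk
    _ = M * Real.exp (Real.log q * k) := by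
        rw [mul_comm (Real.log q), Real.exp_nat_mul, Real.exp_log hq0]
    _ ≤ M * Real.exp (Real.log q * (t - 1)) := by
        have : t - 1 ≤ k := by linarith [Nat.lt_floor_add_one t]
        gcongr ?_ * Real.exp ?_
        exact mul_le_mul_of_nonpos_left this hlogq.le
    _ = M * q⁻¹ * Real.exp (- -Real.log q * t) := by
        rw [mul_sub, mul_one, Real.exp_sub, Real.exp_log hq0, neg_neg]; ring

theorem hasDerivAt_exp_smul_mul_mul_exp_smul (a b s : 𝔸) (t : ℝ) :
    HasDerivAt (fun u : ℝ => exp (u • a) * s * exp (u • b))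
      (a * (exp (t • a) * s * exp (t • b)) + exp (t • a) * s * exp (t • b) * b) t := by
  refine (((hasDerivAt_exp_smul_const' a t).mul_const s).mul
    (hasDerivAt_exp_smul_const b t)).congr_deriv ?_
  simp only [mul_assoc]

theorem integral_exp_smul_mul_mul_exp_smul {a b : 𝔸} (ha : ExpDecay fun t => exp (t • a))
    (hb : ExpDecay fun t => exp (t • b)) (s : 𝔸) :
    IntegrableOn (fun t => exp (t • a) * s * exp (t • b)) (Set.Ioi (0 : ℝ)) ∧
      a * (∫ t in Set.Ioi (0 : ℝ), exp (t • a) * s * exp (t • b)) +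
        (∫ t in Set.Ioi (0 : ℝ), exp (t • a) * s * exp (t • b)) * b = -s := by
  set f := fun t : ℝ => exp (t • a) * s * exp (t • b)
  have hf : ExpDecay f := (ha.mul_const s).mul hb
  have hint : IntegrableOn f (Set.Ioi (0 : ℝ)) :=
    hf.integrableOn_Ioi <| continuous_iff_continuousAt.2 fun t =>
      (hasDerivAt_exp_smul_mul_mul_exp_smul a b s t).continuousAt
  refine ⟨hint, ?_⟩
  have key := integral_Ioi_of_hasDerivAt_of_tendsto'
    (fun t _ => hasDerivAt_exp_smul_mul_mul_exp_smul a b s t)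
    ((hint.const_mul a).add (hint.mul_const b)) hf.tendsto_atTop
  rw [integral_add (hint.const_mul a) (hint.mul_const b), integral_const_mul_of_integrable hint,
    integral_mul_const_of_integrable hint] at key
  simpa [f] using key

end BanachAlgebra

theorem spectrum.exists_norm_pow_lt_one_of_spectralRadius_lt_one {A : Type*} [NormedRing A]
    [NormedAlgebra ℂ A] [CompleteSpace A] {a : A} (h : spectralRadius ℂ a < 1) :
    ∃ k : ℕ, 0 < k ∧ ‖a ^ k‖ < 1 := by
  obtain ⟨k, hk, hk_lt⟩ := ((eventually_gt_atTop 0).and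
    ((pow_norm_pow_one_div_tendsto_nhds_spectralRadius a).eventually (gt_mem_nhds h))).exists
  refine ⟨k, hk, not_le.mp fun h1 => ?_⟩
  rw [ENNReal.ofReal_lt_one] at hk_lt
  exact hk_lt.not_ge (Real.one_le_rpow h1 (by positivity))

namespace Matrix
variable {N : Type*} [Fintype N] [DecidableEq N]

theorem pow_mulVec_of_mulVec_eq_smul {R : Type*} [CommSemiring R] {A : Matrix N N R}
    {v : N → R} {l : R} (hv : A *ᵥ v = l • v) (k : ℕ) : A ^ k *ᵥ v = l ^ k • v := by
  induction k with
  | zero => simp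
  | succ k ih => rw [pow_succ, ← mulVec_mulVec, hv, mulVec_smul, ih, smul_smul, pow_succ']

theorem exp_mulVec_of_mulVec_eq_smul {𝕂 : Type*} [RCLike 𝕂] {A : Matrix N N 𝕂} {v : N → 𝕂}
    {l : 𝕂} (hv : A *ᵥ v = l • v) : exp A *ᵥ v = exp l • v := by
  have hA := (exp_series_hasSum_exp' (𝕂 := 𝕂) A).map (mulVec.addMonoidHomLeft v)
    (continuous_id.matrix_mulVec continuous_const)
  refine hA.unique ?_
  simpa [Function.comp_def, mulVec.addMonoidHomLeft, smul_mulVec,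
    pow_mulVec_of_mulVec_eq_smul hv, smul_smul] using
    (exp_series_hasSum_exp' (𝕂 := 𝕂) l).smul_const v

open Module.End in
theorem spectrum_exp_subset (A : Matrix N N ℂ) : spectrum ℂ (exp A) ⊆ exp '' spectrum ℂ A := by
  intro μ hμ
  have hμ' : HasEigenvalue (toLin' (exp A)) μ := .of_mem_spectrum (by rwa [spectrum_toLin'])
  have hcomm : Commute (toLin' (exp A)) (toLin' A) :=
    ((Commute.refl A).exp_left).map (toLinAlgEquiv' : Matrix N N ℂ ≃ₐ[ℂ] _)
  have : Nontrivial (eigenspace (toLin' (exp A)) μ) := Submodule.nontrivial_iff_ne_bot.mpr hμ'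
  obtain ⟨l, hl⟩ :=
    exists_eigenvalue ((toLin' A).restrict (mapsTo_genEigenspace_of_comm hcomm μ 1))
  obtain ⟨u, hu⟩ := hl.exists_hasEigenvector
  have hu0 : (u : N → ℂ) ≠ 0 := by simpa using hu.2
  have hAu : A *ᵥ u = l • u := congrArg Subtype.val hu.apply_eq_smul
  have hexp : exp A *ᵥ u = μ • u := by simpa using mem_eigenspace_iff.mp u.2
  refine ⟨l, ?_, smul_left_injective ℂ hu0 ?_⟩
  · rw [← spectrum_toLin']
    exact (hasEigenvalue_of_hasEigenvector
      ⟨mem_eigenspace_iff.mpr (by simpa using hAu), hu0⟩).mem_spectrum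
  · change exp l • (u : N → ℂ) = μ • u
    rw [← exp_mulVec_of_mulVec_eq_smul hAu, hexp]

theorem spectralRadius_exp_lt_one {A : Matrix N N ℂ} (hA : ∀ μ ∈ spectrum ℂ A, μ.re < 0) :
    spectralRadius ℂ (exp A) < 1 := by
  rcases subsingleton_or_nontrivial (Matrix N N ℂ) with _ | _
  · simp [spectralRadius, spectrum.of_subsingleton]
  refine mod_cast spectrum.spectralRadius_lt_of_forall_lt (exp A) (r := 1) ?_
  intro z hz
  obtain ⟨l, hl, rfl⟩ := spectrum_exp_subset A hz
  rw [← Complex.exp_eq_exp_ℂ, ← NNReal.coe_lt_coe, coe_nnnorm, Complex.norm_exp]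
  exact Real.exp_lt_one_iff.mpr (hA l hl)

theorem linfty_opNorm_map_ofReal (M : Matrix N N ℝ) : ‖M.map Complex.ofReal‖ = ‖M‖ := by
  simp [linfty_opNorm_def]

theorem exp_map_ofReal (B : Matrix N N ℝ) :
    (exp B).map Complex.ofReal = exp (B.map Complex.ofReal) :=
  map_exp (Complex.ofRealHom.mapMatrix : Matrix N N ℝ →+* Matrix N N ℂ)
    (continuous_id.matrix_map Complex.continuous_ofReal) B

theorem spectrum_transpose {K : Type*} [Field K] (A : Matrix N N K) :
    spectrum K Aᵀ = spectrum K A := by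
  ext; simp [mem_spectrum_iff_isRoot_charpoly, charpoly_transpose]

theorem expDecay_exp_smul {F : Matrix N N ℝ}
    (hF : ∀ μ ∈ spectrum ℂ (F.map Complex.ofReal), μ.re < 0) :
    ExpDecay fun t => exp (t • F) := by
  have hρ : spectralRadius ℂ (exp (F.map Complex.ofReal)) < 1 := spectralRadius_exp_lt_one hF
  obtain ⟨k, hk, hlt⟩ := spectrum.exists_norm_pow_lt_one_of_spectralRadius_lt_one hρ
  have hpow : (exp F ^ k).map Complex.ofReal = exp (F.map Complex.ofReal) ^ k := by
    rw [← exp_map_ofReal]; exact map_pow Complex.ofRealHom.mapMatrix (exp F) k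
  have hk_norm : ‖exp ((k : ℝ) • F)‖ < 1 := by
    rwa [Nat.cast_smul_eq_nsmul, exp_nsmul, ← linfty_opNorm_map_ofReal, hpow]
  exact expDecay_exp_smul_of_smul (Nat.cast_pos.mpr hk)
    (expDecay_exp_smul_of_norm_exp_lt_one hk_norm)

end Matrix

/-- If `F` is Hurwitz (all complex eigenvalues have negative real part), then
`∫₀^∞ e^{tF} S e^{tFᵀ} dt` converges, and
`W₁ = -∫₀^∞ e^{tF} S e^{tFᵀ} dt` solves the algebraic Lyapunov equation
`F W₁ + W₁ Fᵀ = S`. -/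
theorem stmt_17 {n : ℕ} (F S : Matrix (Fin n) (Fin n) ℝ)
    (hF : ∀ μ ∈ spectrum ℂ (F.map Complex.ofReal), μ.re < 0)
    (W₁ : Matrix (Fin n) (Fin n) ℝ)
    (hW₁ : W₁ = -∫ t in Set.Ioi (0 : ℝ),
      NormedSpace.exp (t • F) * S * NormedSpace.exp (t • Fᵀ)) :
    @IntegrableOn _ _ _ _ SeminormedAddGroup.toContinuousENorm
      (fun t : ℝ => NormedSpace.exp (t • F) * S * NormedSpace.exp (t • Fᵀ))
      (Set.Ioi 0) volume ∧
    F * W₁ + W₁ * Fᵀ = S := by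
  have hFT : ∀ μ ∈ spectrum ℂ (Fᵀ.map Complex.ofReal), μ.re < 0 := by
    rwa [transpose_map, spectrum_transpose]
  obtain ⟨hint, hsylvester⟩ :=
    integral_exp_smul_mul_mul_exp_smul (expDecay_exp_smul hF) (expDecay_exp_smul hFT) S
  refine ⟨hint, ?_⟩
  rw [hW₁, mul_neg, neg_mul, ← neg_add]
  exact neg_eq_iff_eq_neg.mpr hsylvester
end
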